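/- arXiv:2102.06773 — 5 statements merged into one kernel-verified Lean document; each statement's English description precedes it below -/
import Mathlib

section
/- Let G be a graph on n vertices and let x be a vertex of G with r neighbors and b = n − 1 − r non-neighbors. Then the number of induced copies of C5 in G containing x is at most r²b²/16, and moreover r²b²/16 ≤ ((n−1)/4)^4. -/
/-!
An induced pentagon `x a c d a'` through `x` has `a, a'` adjacent and `c, d` non-adjacent to
`x`; read in both directions it yields two cross quadruples `(a, a', c, d)`, characterised by
`a ~ c`, `a' ~ d`, `a ≁ d`, `a' ≁ c`. For fixed `(a, a')` there are `k l` of them, where `k`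
(resp. `l`) counts the non-neighbours of `x` adjacent to `a` but not to `a'` (resp. vice versa);
as `k + l ≤ b`, we get `4 k l ≤ b (k + l)`. A non-neighbour of `x` is adjacent to `a` and not to
`a'` for at most `r² / 4` ordered pairs of neighbours, so `∑ (k + l) ≤ b r² / 2`, and there are
at most `r² b² / 8` cross quadruples. The second bound is AM-GM with `r + b = n - 1`.
-/

open Finset

/-- The 5-cycle on `Fin 5`. -/
def C5 : SimpleGraph (Fin 5) := SimpleGraph.fromRel (fun i j => j = i + 1)

/-- The number of induced copies of `C5` in `G` containing the vertex `x`. -/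
noncomputable def c5Through {n : ℕ} (G : SimpleGraph (Fin n)) (x : Fin n) : ℕ :=
  Nat.card {s : Finset (Fin n) // s.card = 5 ∧ x ∈ s ∧
    Nonempty (G.induce (s : Set (Fin n)) ≃g C5)}

theorem Finset.four_mul_card_filter_mul_card_filter_not_le_sq {α : Type*} (s : Finset α)
    (P : α → Prop) [DecidablePred P] :
    4 * (#{a ∈ s | P a} * #{a ∈ s | ¬P a}) ≤ #s ^ 2 := by
  rw [← mul_assoc, ← s.card_filter_add_card_filter_not P]
  exact four_mul_le_sq_add _ _

theorem Finset.four_mul_sum_card_filter_and_not_le {α β : Type*} (R : α → β → Prop)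
    [∀ a b, Decidable (R a b)] (s : Finset α) (t : Finset β) :
    4 * ∑ p ∈ s ×ˢ s, #{c ∈ t | R p.1 c ∧ ¬R p.2 c} ≤ #t * #s ^ 2 := by
  have hcount := sum_card_bipartiteAbove_eq_sum_card_bipartiteBelow
    (fun (p : α × α) c => R p.1 c ∧ ¬R p.2 c) (s := s ×ˢ s) (t := t)
  simp only [bipartiteAbove, bipartiteBelow] at hcount
  rw [hcount, mul_sum, ← smul_eq_mul, ← sum_const]
  refine sum_le_sum fun c _ => ?_
  rw [filter_product (R · c) (¬R · c), card_product]
  exact four_mul_card_filter_mul_card_filter_not_le_sq s (R · c)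

theorem sq_mul_sq_div_sixteen_le {r b : ℝ} (hr : 0 ≤ r) (hb : 0 ≤ b) :
    r ^ 2 * b ^ 2 / 16 ≤ ((r + b) / 4) ^ 4 := by
  have hamgm := four_mul_le_sq_add r b
  calc r ^ 2 * b ^ 2 / 16 = (r * b / 4) ^ 2 := by ring
    _ ≤ ((r + b) ^ 2 / 16) ^ 2 := pow_le_pow_left₀ (by positivity) (by linarith) 2
    _ = ((r + b) / 4) ^ 4 := by ring

instance : DecidableRel C5.Adj :=
  inferInstanceAs (DecidableRel fun i j : Fin 5 => i ≠ j ∧ (j = i + 1 ∨ i = j + 1))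

theorem c5_adj_add_left (t k l : Fin 5) : C5.Adj (t + k) (t + l) ↔ C5.Adj k l := by
  revert t k l; decide

def c5Rotation (t : Fin 5) : C5 ≃g C5 where
  toEquiv := Equiv.addLeft t
  map_rel_iff' := c5_adj_add_left t _ _

theorem exists_c5_embedding_of_iso {V : Type*} {G : SimpleGraph V} {s : Set V}
    (e : G.induce s ≃g C5) {x : V} (hx : x ∈ s) :
    ∃ f : C5 ↪g G, f 0 = x ∧ Set.range f = s := by
  let f : C5 ↪g G := (SimpleGraph.Embedding.induce s).comp
    (e.symm.comp (c5Rotation (e ⟨x, hx⟩))).toEmbedding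
  refine ⟨f, show ((e.symm (e ⟨x, hx⟩ + 0) : s) : V) = x by simp, ?_⟩
  simp only [f, SimpleGraph.Embedding.coe_comp, Set.range_comp, RelIso.coe_toRelEmbedding,
    SimpleGraph.Iso.coe_comp, EquivLike.range_eq_univ, Set.image_univ]
  exact Subtype.range_coe

namespace SimpleGraph

variable {V : Type*} [Fintype V] [DecidableEq V] (G : SimpleGraph V) [DecidableRel G.Adj]

def crossQuadruples (x : V) : Finset (Σ _ : V × V, V × V) :=
  (G.neighborFinset x ×ˢ G.neighborFinset x).sigma fun p =>
    {c ∈ Gᶜ.neighborFinset x | G.Adj p.1 c ∧ ¬G.Adj p.2 c} ×ˢ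
      {d ∈ Gᶜ.neighborFinset x | G.Adj p.2 d ∧ ¬G.Adj p.1 d}

variable {G}

theorem mem_crossQuadruples {x a a' c d : V} :
    ⟨(a, a'), (c, d)⟩ ∈ G.crossQuadruples x ↔
      G.Adj x a ∧ G.Adj x a' ∧ x ≠ c ∧ ¬G.Adj x c ∧ x ≠ d ∧ ¬G.Adj x d ∧
        G.Adj a c ∧ G.Adj a' d ∧ ¬G.Adj a d ∧ ¬G.Adj a' c := by
  simp only [crossQuadruples, mem_sigma, mem_product, mem_filter, mem_neighborFinset, compl_adj]
  tauto

theorem Embedding.map_mem_crossQuadruples {W : Type*} [Fintype W] [DecidableEq W]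
    {H : SimpleGraph W} [DecidableRel H.Adj] (f : H ↪g G) {x a a' c d : W}
    (h : ⟨(a, a'), (c, d)⟩ ∈ H.crossQuadruples x) :
    ⟨(f a, f a'), (f c, f d)⟩ ∈ G.crossQuadruples (f x) := by
  simpa only [mem_crossQuadruples, f.map_adj_iff, f.injective.ne_iff] using h

theorem card_filter_adj_and_not_adj_add_le (x a a' : V) :
    #{c ∈ Gᶜ.neighborFinset x | G.Adj a c ∧ ¬G.Adj a' c} +
      #{c ∈ Gᶜ.neighborFinset x | G.Adj a' c ∧ ¬G.Adj a c} ≤ Gᶜ.degree x := by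
  rw [← card_union_of_disjoint (disjoint_filter.2 fun _ _ h h' => h'.2 h.1), ← filter_or,
    ← card_neighborFinset_eq_degree]
  exact card_filter_le _ _

theorem eight_mul_card_crossQuadruples_le (x : V) :
    8 * #(G.crossQuadruples x) ≤ G.degree x ^ 2 * Gᶜ.degree x ^ 2 := by
  set N := G.neighborFinset x
  set B := Gᶜ.neighborFinset x
  set D : V → V → ℕ := fun a a' => #{c ∈ B | G.Adj a c ∧ ¬G.Adj a' c}
  have hswap : ∑ p ∈ N ×ˢ N, D p.2 p.1 = ∑ p ∈ N ×ˢ N, D p.1 p.2 := by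
    rw [sum_product, sum_product_right]
  have hN : #N = G.degree x := card_neighborFinset_eq_degree G x
  have hB : #B = Gᶜ.degree x := card_neighborFinset_eq_degree Gᶜ x
  calc 8 * #(G.crossQuadruples x) = 2 * ∑ p ∈ N ×ˢ N, 4 * D p.1 p.2 * D p.2 p.1 := by
        simp only [crossQuadruples, card_sigma, card_product, mul_sum, D, N, B]; ring_nf
    _ ≤ 2 * ∑ p ∈ N ×ˢ N, #B * (D p.1 p.2 + D p.2 p.1) := by
        refine Nat.mul_le_mul_left 2 (sum_le_sum fun p _ => ?_)
        have hsep : D p.1 p.2 + D p.2 p.1 ≤ #B :=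
          hB ▸ card_filter_adj_and_not_adj_add_le x p.1 p.2
        nlinarith [four_mul_le_sq_add (D p.1 p.2) (D p.2 p.1)]
    _ = #B * (4 * ∑ p ∈ N ×ˢ N, D p.1 p.2) := by
        rw [← mul_sum, sum_add_distrib, hswap]; ring
    _ ≤ #B * (#B * #N ^ 2) :=
        Nat.mul_le_mul_left _ (four_mul_sum_card_filter_and_not_le G.Adj N B)
    _ = G.degree x ^ 2 * Gᶜ.degree x ^ 2 := by rw [hN, hB]; ring

end SimpleGraph

open SimpleGraph

theorem two_mul_c5Through_le {n : ℕ} (G : SimpleGraph (Fin n)) [DecidableRel G.Adj]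
    (x : Fin n) : 2 * c5Through G x ≤ #(G.crossQuadruples x) := by
  classical
  let S : Finset (Finset (Fin n)) :=
    {s | s.card = 5 ∧ x ∈ s ∧ Nonempty (G.induce (s : Set (Fin n)) ≃g C5)}
  have hS : c5Through G x = #S := by
    rw [c5Through, Nat.card_eq_fintype_card, Fintype.card_subtype]
  let vertices (q : Σ _ : Fin n × Fin n, Fin n × Fin n) : Finset (Fin n) :=
    {x, q.1.1, q.1.2, q.2.1, q.2.2}
  have htwo : ∀ s ∈ S,
      2 ≤ #((G.crossQuadruples x).bipartiteAbove (fun s q => vertices q = s) s) := by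
    intro s hs
    obtain ⟨-, hx, ⟨e⟩⟩ := (mem_filter.1 hs).2
    obtain ⟨f, rfl, hf⟩ := exists_c5_embedding_of_iso e hx
    have hverts : ∀ z, z ∈ s ↔ z = f 0 ∨ z = f 1 ∨ z = f 2 ∨ z = f 3 ∨ z = f 4 := by
      intro z
      rw [← mem_coe, ← hf]
      simp [Fin.exists_fin_succ, eq_comm]
    refine one_lt_card.2 ⟨⟨(f 1, f 4), (f 2, f 3)⟩, ?_, ⟨(f 4, f 1), (f 3, f 2)⟩, ?_, ?_⟩
    · refine (mem_bipartiteAbove _).2 ⟨f.map_mem_crossQuadruples ?_, ?_⟩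
      · rw [mem_crossQuadruples]; decide
      · ext z; simp only [vertices, mem_insert, mem_singleton, hverts]; tauto
    · refine (mem_bipartiteAbove _).2 ⟨f.map_mem_crossQuadruples ?_, ?_⟩
      · rw [mem_crossQuadruples]; decide
      · ext z; simp only [vertices, mem_insert, mem_singleton, hverts]; tauto
    · simp [f.injective.eq_iff]
  have hone : ∀ q ∈ G.crossQuadruples x,
      #(S.bipartiteBelow (fun s q => vertices q = s) q) ≤ 1 :=
    fun q _ => card_le_one.2 fun s hs t ht =>
      ((mem_bipartiteBelow _).1 hs).2.symm.trans ((mem_bipartiteBelow _).1 ht).2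
  have := card_mul_le_card_mul _ htwo hone
  omega

/-- If `x` is a vertex of a graph `G` on `n` vertices with `r` neighbors and
`b = n − 1 − r` non-neighbors, then the number of induced copies of `C5` containing `x`
is at most `r²b²/16`, and `r²b²/16 ≤ ((n−1)/4)⁴`. -/
theorem c5_through_vertex_bound (n : ℕ) (G : SimpleGraph (Fin n))
    [DecidableRel G.Adj] (x : Fin n) (r b : ℕ)
    (hr : r = G.degree x) (hb : b = n - 1 - r) :
    (c5Through G x : ℝ) ≤ (r : ℝ) ^ 2 * (b : ℝ) ^ 2 / 16 ∧
    (r : ℝ) ^ 2 * (b : ℝ) ^ 2 / 16 ≤ (((n : ℝ) - 1) / 4) ^ 4 := by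
  have hbdeg : b = Gᶜ.degree x := by rw [degree_compl, Fintype.card_fin, hb, hr]
  have hcount : 16 * c5Through G x ≤ r ^ 2 * b ^ 2 := calc
    16 * c5Through G x ≤ 8 * #(G.crossQuadruples x) := by
      have := two_mul_c5Through_le G x; omega
    _ ≤ r ^ 2 * b ^ 2 := hr ▸ hbdeg ▸ eight_mul_card_crossQuadruples_le x
  have hrb : r + b = n - 1 := by
    have := G.degree_lt_card_verts x
    rw [Fintype.card_fin] at this; omega
  have hn : (n : ℝ) - 1 = r + b := by
    rw [← Nat.cast_one, ← Nat.cast_sub x.pos, ← hrb, Nat.cast_add]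
  refine ⟨?_, hn ▸ sq_mul_sq_div_sixteen_le r.cast_nonneg b.cast_nonneg⟩
  rw [le_div_iff₀ (by norm_num)]
  exact_mod_cast (mul_comm _ _).trans_le hcount
end

section
/- Let G be a graph on n ≥ 2 vertices and let X be a set of 2 vertices of G. Then the number of induced copies of C5 in G whose vertex set contains X is at most ((n−2)/3)^3. -/
noncomputable def c5ThroughSet {n : ℕ} (G : SimpleGraph (Fin n)) (X : Finset (Fin n)) : ℕ :=
  Nat.card {s : Finset (Fin n) // s.card = 5 ∧ X ⊆ s ∧
    Nonempty (G.induce (s : Set (Fin n)) ≃g C5)}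

set_option synthInstance.maxSize 2000 in
set_option synthInstance.maxHeartbeats 1000000 in
set_option maxHeartbeats 2000000 in
lemma C5_key : ∀ i j : Fin 5, i ≠ j → ∃ a b c : Fin 5,
    a ≠ b ∧ a ≠ c ∧ b ≠ c ∧ a ≠ i ∧ a ≠ j ∧ b ≠ i ∧ b ≠ j ∧ c ≠ i ∧ c ≠ j ∧
    (C5.Adj i a ∧ ¬C5.Adj j a) ∧
    ((C5.Adj i b ↔ ¬C5.Adj i j) ∧ (C5.Adj j b ↔ ¬C5.Adj i j)) ∧
    (C5.Adj j c ∧ ¬C5.Adj i c) := by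
  simp only [C5, SimpleGraph.fromRel_adj]
  decide

lemma main_aux {n : ℕ} (G : SimpleGraph (Fin n)) (x y : Fin n) (hxy : x ≠ y)
    (s : Finset (Fin n)) (h5 : s.card = 5) (hx : x ∈ s) (hy : y ∈ s)
    (e : G.induce (s : Set (Fin n)) ≃g C5) :
    ∃ a b c : Fin n,
      (G.Adj x a ∧ ¬G.Adj y a ∧ a ≠ y) ∧
      ((G.Adj x b ↔ ¬G.Adj x y) ∧ (G.Adj y b ↔ ¬G.Adj x y) ∧ b ≠ x ∧ b ≠ y) ∧
      (G.Adj y c ∧ ¬G.Adj x c ∧ c ≠ x) ∧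
      s = {x, y, a, b, c} := by
  classical
  set xs : (s : Set (Fin n)) := ⟨x, by simpa using hx⟩ with hxsdef
  set ys : (s : Set (Fin n)) := ⟨y, by simpa using hy⟩ with hysdef
  have hij : e xs ≠ e ys := fun h => hxy (congrArg Subtype.val (e.injective h))
  obtain ⟨a', b', c', hab, hac, hbc, hai, haj, hbi, hbj, hci, hcj, hAc, hBc, hCc⟩ :=
    C5_key _ _ hij
  have hadj : ∀ p q : Fin 5, C5.Adj p q ↔ G.Adj (e.symm p : Fin n) (e.symm q : Fin n) := by
    intro p q
    simpa using e.map_adj_iff (v := e.symm p) (w := e.symm q)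
  have h1 : ∀ q : Fin 5, C5.Adj (e xs) q ↔ G.Adj x (e.symm q : Fin n) := by
    intro q; rw [hadj, e.symm_apply_apply]
  have h2 : ∀ q : Fin 5, C5.Adj (e ys) q ↔ G.Adj y (e.symm q : Fin n) := by
    intro q; rw [hadj, e.symm_apply_apply]
  have hxyadj : C5.Adj (e xs) (e ys) ↔ G.Adj x y := by
    rw [h1, e.symm_apply_apply]
  have coe_ne : ∀ {u v : (s : Set (Fin n))}, u ≠ v → (u : Fin n) ≠ (v : Fin n) :=
    fun h h' => h (Subtype.ext h')
  have symm_ne_xs : ∀ {p : Fin 5}, p ≠ e xs → e.symm p ≠ xs := by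
    intro p hp h; exact hp (by rw [← h, e.apply_symm_apply])
  have symm_ne_ys : ∀ {p : Fin 5}, p ≠ e ys → e.symm p ≠ ys := by
    intro p hp h; exact hp (by rw [← h, e.apply_symm_apply])
  refine ⟨(e.symm a' : Fin n), (e.symm b' : Fin n), (e.symm c' : Fin n), ?_, ?_, ?_, ?_⟩
  · exact ⟨(h1 a').mp hAc.1, fun h => hAc.2 ((h2 a').mpr h), coe_ne (symm_ne_ys haj)⟩
  · refine ⟨?_, ?_, coe_ne (symm_ne_xs hbi), coe_ne (symm_ne_ys hbj)⟩
    · rw [← h1 b', hBc.1, hxyadj]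
    · rw [← h2 b', hBc.2, hxyadj]
  · exact ⟨(h2 c').mp hCc.1, fun h => hCc.2 ((h1 c').mpr h), coe_ne (symm_ne_xs hci)⟩
  · -- s = {x, y, a, b, c}
    have hax : ((e.symm a' : (s:Set (Fin n))) : Fin n) ≠ x := coe_ne (symm_ne_xs hai)
    have hay : ((e.symm a' : (s:Set (Fin n))) : Fin n) ≠ y := coe_ne (symm_ne_ys haj)
    have hbx : ((e.symm b' : (s:Set (Fin n))) : Fin n) ≠ x := coe_ne (symm_ne_xs hbi)
    have hby : ((e.symm b' : (s:Set (Fin n))) : Fin n) ≠ y := coe_ne (symm_ne_ys hbj)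
    have hcx : ((e.symm c' : (s:Set (Fin n))) : Fin n) ≠ x := coe_ne (symm_ne_xs hci)
    have hcy : ((e.symm c' : (s:Set (Fin n))) : Fin n) ≠ y := coe_ne (symm_ne_ys hcj)
    have hab2 : ((e.symm a' : (s:Set (Fin n))) : Fin n) ≠ (e.symm b' : Fin n) :=
      coe_ne (fun h => hab (by rw [← e.apply_symm_apply a', h, e.apply_symm_apply]))
    have hac2 : ((e.symm a' : (s:Set (Fin n))) : Fin n) ≠ (e.symm c' : Fin n) :=
      coe_ne (fun h => hac (by rw [← e.apply_symm_apply a', h, e.apply_symm_apply]))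
    have hbc2 : ((e.symm b' : (s:Set (Fin n))) : Fin n) ≠ (e.symm c' : Fin n) :=
      coe_ne (fun h => hbc (by rw [← e.apply_symm_apply b', h, e.apply_symm_apply]))
    have hma : ((e.symm a' : (s:Set (Fin n))) : Fin n) ∈ s := by
      simpa using (e.symm a').2
    have hmb : ((e.symm b' : (s:Set (Fin n))) : Fin n) ∈ s := by
      simpa using (e.symm b').2
    have hmc : ((e.symm c' : (s:Set (Fin n))) : Fin n) ∈ s := by
      simpa using (e.symm c').2
    have hsub : ({x, y, (e.symm a' : Fin n), (e.symm b' : Fin n), (e.symm c' : Fin n)} :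
        Finset (Fin n)) ⊆ s := by
      simp only [Finset.insert_subset_iff, Finset.singleton_subset_iff]
      exact ⟨hx, hy, hma, hmb, hmc⟩
    have hcard : ({x, y, (e.symm a' : Fin n), (e.symm b' : Fin n), (e.symm c' : Fin n)} :
        Finset (Fin n)).card = 5 := by
      rw [Finset.card_insert_of_notMem (by simp only [Finset.mem_insert, Finset.mem_singleton, not_or]; exact ⟨hxy, fun h => hax h.symm, fun h => hbx h.symm, fun h => hcx h.symm⟩),
        Finset.card_insert_of_notMem (by simp only [Finset.mem_insert, Finset.mem_singleton, not_or]; exact ⟨fun h => hay h.symm, fun h => hby h.symm, fun h => hcy h.symm⟩),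
        Finset.card_insert_of_notMem (by simp only [Finset.mem_insert, Finset.mem_singleton, not_or]; exact ⟨hab2, hac2⟩),
        Finset.card_insert_of_notMem (by simp only [Finset.mem_singleton]; exact hbc2),
        Finset.card_singleton]
    exact (Finset.eq_of_subset_of_card_le hsub (by rw [h5, hcard])).symm

/-- If `X` is a set of 2 vertices of a graph `G` on `n ≥ 2` vertices, then the number of
induced copies of `C5` containing `X` is at most `((n−2)/3)³`. -/
theorem c5_through_pair_bound (n : ℕ) (hn : 2 ≤ n) (G : SimpleGraph (Fin n))
    (X : Finset (Fin n)) (hX : X.card = 2) :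
    (c5ThroughSet G X : ℝ) ≤ (((n : ℝ) - 2) / 3) ^ 3 := by
  classical
  obtain ⟨x, y, hxy, rfl⟩ := Finset.card_eq_two.mp hX
  set A := Finset.univ.filter (fun v : Fin n => G.Adj x v ∧ ¬G.Adj y v ∧ v ≠ y) with hA
  set B := Finset.univ.filter (fun v : Fin n =>
    (G.Adj x v ↔ ¬G.Adj x y) ∧ (G.Adj y v ↔ ¬G.Adj x y) ∧ v ≠ x ∧ v ≠ y) with hB
  set Cs := Finset.univ.filter (fun v : Fin n => G.Adj y v ∧ ¬G.Adj x v ∧ v ≠ x) with hC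
  have hcount : c5ThroughSet G {x, y} ≤ A.card * (B.card * Cs.card) := by
    have heq : c5ThroughSet G {x, y} = (Finset.univ.filter
        (fun s : Finset (Fin n) => s.card = 5 ∧ {x, y} ⊆ s ∧
          Nonempty (G.induce (s : Set (Fin n)) ≃g C5))).card := by
      rw [c5ThroughSet, Nat.card_eq_fintype_card, Fintype.card_subtype]
    rw [heq]
    have hsub : (Finset.univ.filter
        (fun s : Finset (Fin n) => s.card = 5 ∧ {x, y} ⊆ s ∧
          Nonempty (G.induce (s : Set (Fin n)) ≃g C5))) ⊆ (A ×ˢ B ×ˢ Cs).image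
        (fun t : Fin n × Fin n × Fin n => {x, y, t.1, t.2.1, t.2.2}) := by
      intro s hs
      simp only [Finset.mem_filter] at hs
      obtain ⟨-, h5, hXs, ⟨e⟩⟩ := hs
      have hxm : x ∈ s := hXs (by simp)
      have hym : y ∈ s := hXs (by simp)
      obtain ⟨a, b, c, ha, hb, hc, hseq⟩ := main_aux G x y hxy s h5 hxm hym e
      refine Finset.mem_image.mpr ⟨(a, b, c), ?_, hseq.symm⟩
      simp only [Finset.mem_product, hA, hB, hC, Finset.mem_filter, Finset.mem_univ,
        true_and]
      exact ⟨ha, hb, hc⟩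
    calc (Finset.univ.filter _).card ≤ _ := Finset.card_le_card hsub
      _ ≤ (A ×ˢ B ×ˢ Cs).card := Finset.card_image_le
      _ = A.card * (B.card * Cs.card) := by
          rw [Finset.card_product, Finset.card_product]
  have hdAB : Disjoint A B := by
    rw [Finset.disjoint_left]
    intro v hv hv'
    simp only [hA, hB, Finset.mem_filter, Finset.mem_univ, true_and] at hv hv'
    by_cases hGxy : G.Adj x y <;> tauto
  have hdACs : Disjoint A Cs := by
    rw [Finset.disjoint_left]
    intro v hv hv'
    simp only [hA, hC, Finset.mem_filter, Finset.mem_univ, true_and] at hv hv'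
    tauto
  have hdBCs : Disjoint B Cs := by
    rw [Finset.disjoint_left]
    intro v hv hv'
    simp only [hB, hC, Finset.mem_filter, Finset.mem_univ, true_and] at hv hv'
    by_cases hGxy : G.Adj x y <;> tauto
  have hsum : A.card + B.card + Cs.card ≤ n - 2 := by
    have hdisj : Disjoint (A ∪ B) Cs := Finset.disjoint_union_left.mpr ⟨hdACs, hdBCs⟩
    have hsub2 : A ∪ B ∪ Cs ⊆ (Finset.univ.erase y).erase x := by
      intro v hv
      simp only [Finset.mem_union, hA, hB, hC, Finset.mem_filter, Finset.mem_univ,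
        true_and] at hv
      rw [Finset.mem_erase, Finset.mem_erase]
      refine ⟨?_, ?_, Finset.mem_univ v⟩
      · rcases hv with (h | h) | h
        · exact h.1.ne'
        · exact h.2.2.1
        · exact h.2.2
      · rcases hv with (h | h) | h
        · exact h.2.2
        · exact h.2.2.2
        · exact h.1.ne'
    have hle : (A ∪ B ∪ Cs).card ≤ n - 2 := by
      refine (Finset.card_le_card hsub2).trans ?_
      rw [Finset.card_erase_of_mem (by simp [hxy]), Finset.card_erase_of_mem (by simp),
        Finset.card_univ, Fintype.card_fin]
      omega
    calc A.card + B.card + Cs.card = (A ∪ B).card + Cs.card := by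
          rw [Finset.card_union_of_disjoint hdAB]
      _ = (A ∪ B ∪ Cs).card := (Finset.card_union_of_disjoint hdisj).symm
      _ ≤ n - 2 := hle
  -- pass to the reals
  have hsumR : (A.card : ℝ) + B.card + Cs.card ≤ (n : ℝ) - 2 := by
    have : ((A.card + B.card + Cs.card : ℕ) : ℝ) ≤ ((n - 2 : ℕ) : ℝ) := by
      exact_mod_cast hsum
    rw [Nat.cast_sub hn] at this
    push_cast at this
    linarith
  have ha0 : (0:ℝ) ≤ A.card := Nat.cast_nonneg _
  have hb0 : (0:ℝ) ≤ B.card := Nat.cast_nonneg _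
  have hc0 : (0:ℝ) ≤ Cs.card := Nat.cast_nonneg _
  have hcountR : (c5ThroughSet G {x, y} : ℝ) ≤ (A.card : ℝ) * B.card * Cs.card := by
    have := hcount
    have h' : (c5ThroughSet G {x, y} : ℝ) ≤ ((A.card * (B.card * Cs.card) : ℕ) : ℝ) := by
      exact_mod_cast this
    push_cast at h'
    linarith [h']
  have amgm : (A.card : ℝ) * B.card * Cs.card ≤
      (((A.card : ℝ) + B.card + Cs.card) / 3) ^ 3 := by
    set a := (A.card : ℝ); set b := (B.card : ℝ); set c := (Cs.card : ℝ)
    have h27 : 27 * (a * b * c) ≤ (a + b + c) ^ 3 := by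
      nlinarith [mul_nonneg ha0 (sq_nonneg (b - c)), mul_nonneg hb0 (sq_nonneg (a - c)),
        mul_nonneg hc0 (sq_nonneg (a - b)),
        mul_nonneg (add_nonneg (add_nonneg ha0 hb0) hc0) (sq_nonneg (a - b)),
        mul_nonneg (add_nonneg (add_nonneg ha0 hb0) hc0) (sq_nonneg (b - c)),
        mul_nonneg (add_nonneg (add_nonneg ha0 hb0) hc0) (sq_nonneg (a - c))]
    rw [div_pow]
    rw [le_div_iff₀ (by norm_num : (0:ℝ) < 3 ^ 3)]
    linarith
  have hmono : ((((A.card : ℝ) + B.card + Cs.card)) / 3) ^ 3 ≤ (((n:ℝ) - 2) / 3) ^ 3 := by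
    apply pow_le_pow_left₀ (by positivity)
    exact div_le_div_of_nonneg_right hsumR (by norm_num)
  calc (c5ThroughSet G {x, y} : ℝ) ≤ (A.card : ℝ) * B.card * Cs.card := hcountR
    _ ≤ _ := amgm
    _ ≤ _ := hmono
end

section
/- Let G be a graph on n ≥ 3 vertices and let X be a set of 3 vertices of G. Then the number of induced copies of C5 in G whose vertex set contains X is at most ((n−3)/2)^2. -/
/-! An induced `C5` through `X = {x₁, x₂, x₃}` is `X ∪ {u, v}`, and inspecting `C5` shows that
the adjacency pattern of `G` on `X` already determines the traces `N(u) ∩ X` and `N(v) ∩ X` up to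
order, and that these two traces differ. So the copies inject into `S₁ × S₂`, where `S₁`, `S₂` are
the disjoint sets of vertices outside `X` with these two traces, and
`|S₁| |S₂| ≤ ((|S₁| + |S₂|) / 2)² ≤ ((n - 3) / 2)²`. -/

open Finset

instance inst_s10 : DecidableRel C5.Adj := fun a b =>
  decidable_of_iff (a ≠ b ∧ (b = a + 1 ∨ a = b + 1)) Iff.rfl

theorem mul_le_sq_half_sub {a b k m : ℕ} (h : a + b + k ≤ m) :
    (a * b : ℝ) ≤ (((m : ℝ) - k) / 2) ^ 2 := by
  have hab : (a : ℝ) + b ≤ m - k := by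
    rw [le_sub_iff_add_le]; exact_mod_cast h
  calc (a * b : ℝ) ≤ ((a + b) / 2) ^ 2 := by nlinarith [sq_nonneg ((a : ℝ) - b)]
    _ ≤ _ := by gcongr

theorem card_filter_add_card_filter_add_card_le {V β : Type*} [Fintype V] [DecidableEq V]
    [DecidableEq β] (X : Finset V) (f : V → β) {b₁ b₂ : β} (hb : b₁ ≠ b₂) :
    #{w | w ∉ X ∧ f w = b₁} + #{w | w ∉ X ∧ f w = b₂} + #X ≤ Fintype.card V := by
  rw [← card_union_of_disjoint, ← card_union_of_disjoint]
  · exact card_le_univ _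
  · exact Finset.disjoint_left.mpr fun {w} hw hX => by
      rcases mem_union.mp hw with h | h <;> exact (mem_filter.mp h).2.1 hX
  · exact disjoint_filter.mpr fun w _ h₁ h₂ => hb (h₁.2.symm.trans h₂.2)

namespace SimpleGraph

variable {V W : Type*}

def adjSig (G : SimpleGraph V) [DecidableRel G.Adj] (x₁ x₂ x₃ w : V) : Bool × Bool × Bool :=
  (decide (G.Adj w x₁), decide (G.Adj w x₂), decide (G.Adj w x₃))

def adjPattern (G : SimpleGraph V) [DecidableRel G.Adj] (x₁ x₂ x₃ : V) : Bool × Bool × Bool :=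
  (decide (G.Adj x₁ x₂), decide (G.Adj x₁ x₃), decide (G.Adj x₂ x₃))

/-- The signatures `adjSig x₁ x₂ x₃` of the two remaining vertices of an induced 5-cycle through
`x₁, x₂, x₃`, as a function of `adjPattern x₁ x₂ x₃`: if the triple induces a path `a - b - c`
they are `{a}` and `{c}`, if it induces an edge `ab` and an isolated `c` they are `{a, c}` and
`{b, c}`. Triangles and independent triples do not occur in `C5`; the last case is arbitrary. -/
def c5ExtraSigs : Bool × Bool × Bool → (Bool × Bool × Bool) × (Bool × Bool × Bool)
  | (true, true, false) => ((false, true, false), (false, false, true))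
  | (true, false, true) => ((true, false, false), (false, false, true))
  | (false, true, true) => ((true, false, false), (false, true, false))
  | (true, false, false) => ((true, false, true), (false, true, true))
  | (false, true, false) => ((true, true, false), (false, true, true))
  | (false, false, true) => ((true, true, false), (true, false, true))
  | _ => ((true, true, true), (false, false, false))

theorem c5ExtraSigs_fst_ne_snd : ∀ t, (c5ExtraSigs t).1 ≠ (c5ExtraSigs t).2 := by decide

theorem C5_adjSig_extra : ∀ p q r a b : Fin 5, [p, q, r, a, b].Nodup →
    (C5.adjSig p q r a, C5.adjSig p q r b) = c5ExtraSigs (C5.adjPattern p q r) ∨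
    (C5.adjSig p q r b, C5.adjSig p q r a) = c5ExtraSigs (C5.adjPattern p q r) := by
  decide

theorem Iso.adjSig_induce_eq (G : SimpleGraph V) [DecidableRel G.Adj] {s : Set V}
    {H : SimpleGraph W} [DecidableRel H.Adj] (e : G.induce s ≃g H) (x₁ x₂ x₃ w : s) :
    H.adjSig (e x₁) (e x₂) (e x₃) (e w) = G.adjSig x₁ x₂ x₃ w := by
  simp [adjSig, Iso.map_adj_iff]

theorem Iso.adjPattern_induce_eq (G : SimpleGraph V) [DecidableRel G.Adj] {s : Set V}
    {H : SimpleGraph W} [DecidableRel H.Adj] (e : G.induce s ≃g H) (x₁ x₂ x₃ : s) :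
    H.adjPattern (e x₁) (e x₂) (e x₃) = G.adjPattern x₁ x₂ x₃ := by
  simp [adjPattern, Iso.map_adj_iff]

variable [DecidableEq V]

theorem exists_eq_insert_insert_of_induce_iso_C5 (G : SimpleGraph V) [DecidableRel G.Adj]
    {x₁ x₂ x₃ : V} (h₁₂ : x₁ ≠ x₂) (h₁₃ : x₁ ≠ x₃) (h₂₃ : x₂ ≠ x₃) {s : Finset V}
    (hs : s.card = 5) (hXs : {x₁, x₂, x₃} ⊆ s) (e : G.induce (s : Set V) ≃g C5) :
    ∃ u v, u ∉ ({x₁, x₂, x₃} : Finset V) ∧ v ∉ ({x₁, x₂, x₃} : Finset V) ∧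
      G.adjSig x₁ x₂ x₃ u = (c5ExtraSigs (G.adjPattern x₁ x₂ x₃)).1 ∧
      G.adjSig x₁ x₂ x₃ v = (c5ExtraSigs (G.adjPattern x₁ x₂ x₃)).2 ∧
      s = insert u (insert v {x₁, x₂, x₃}) := by
  set X : Finset V := {x₁, x₂, x₃}
  have hX : X.card = 3 := card_eq_three.mpr ⟨x₁, x₂, x₃, h₁₂, h₁₃, h₂₃, rfl⟩
  obtain ⟨u, v, huv, hsX⟩ : ∃ u v, u ≠ v ∧ s \ X = {u, v} :=
    card_eq_two.mp (by rw [card_sdiff_of_subset hXs, hs, hX])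
  have hu : u ∈ s \ X := by simp [hsX]
  have hv : v ∈ s \ X := by simp [hsX]
  simp only [mem_sdiff] at hu hv
  have hs_eq : s = insert u (insert v X) := by
    rw [← sdiff_union_of_subset hXs, hsX, insert_union, singleton_union]
  have hx₁ : x₁ ∈ s := hXs (by simp [X])
  have hx₂ : x₂ ∈ s := hXs (by simp [X])
  have hx₃ : x₃ ∈ s := hXs (by simp [X])
  have hnodup : [e ⟨x₁, hx₁⟩, e ⟨x₂, hx₂⟩, e ⟨x₃, hx₃⟩, e ⟨u, hu.1⟩, e ⟨v, hv.1⟩].Nodup := by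
    have hV : [x₁, x₂, x₃, u, v].Nodup := by
      simp only [X, mem_insert, mem_singleton, not_or] at hu hv
      simp [h₁₂, h₁₃, h₂₃, huv, hu.2, hv.2, Ne.symm]
    have hsub : ([⟨x₁, hx₁⟩, ⟨x₂, hx₂⟩, ⟨x₃, hx₃⟩, ⟨u, hu.1⟩, ⟨v, hv.1⟩] : List s).Nodup :=
      .of_map Subtype.val (by exact hV)
    simpa using hsub.map e.injective
  rcases C5_adjSig_extra _ _ _ _ _ hnodup with h | h <;>
    simp only [Iso.adjSig_induce_eq, Iso.adjPattern_induce_eq] at h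
  · exact ⟨u, v, hu.2, hv.2, congrArg Prod.fst h, congrArg Prod.snd h, hs_eq⟩
  · exact ⟨v, u, hv.2, hu.2, congrArg Prod.fst h, congrArg Prod.snd h, by rw [hs_eq, insert_comm]⟩

variable [Fintype V]

theorem natCard_induce_iso_C5_le (G : SimpleGraph V) [DecidableRel G.Adj] {x₁ x₂ x₃ : V}
    (h₁₂ : x₁ ≠ x₂) (h₁₃ : x₁ ≠ x₃) (h₂₃ : x₂ ≠ x₃) :
    Nat.card {s : Finset V // s.card = 5 ∧ {x₁, x₂, x₃} ⊆ s ∧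
        Nonempty (G.induce (s : Set V) ≃g C5)} ≤
      #{w | w ∉ ({x₁, x₂, x₃} : Finset V) ∧
          G.adjSig x₁ x₂ x₃ w = (c5ExtraSigs (G.adjPattern x₁ x₂ x₃)).1} *
      #{w | w ∉ ({x₁, x₂, x₃} : Finset V) ∧
          G.adjSig x₁ x₂ x₃ w = (c5ExtraSigs (G.adjPattern x₁ x₂ x₃)).2} := by
  classical
  rw [Nat.card_eq_fintype_card, Fintype.card_subtype, ← card_product]
  refine (card_le_card ?_).trans
    (card_image_le (f := fun p : V × V => insert p.1 (insert p.2 {x₁, x₂, x₃})))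
  intro s hs
  obtain ⟨hcard, hXs, ⟨e⟩⟩ := (mem_filter.mp hs).2
  obtain ⟨u, v, hu, hv, hsu, hsv, rfl⟩ :=
    exists_eq_insert_insert_of_induce_iso_C5 G h₁₂ h₁₃ h₂₃ hcard hXs e
  exact mem_image.mpr ⟨(u, v), by
    simp only [mem_product, mem_filter, mem_univ, true_and]; exact ⟨⟨hu, hsu⟩, hv, hsv⟩, rfl⟩

theorem natCard_induce_iso_C5_le_sq (G : SimpleGraph V) {X : Finset V} (hX : X.card = 3) :
    (Nat.card {s : Finset V // s.card = 5 ∧ X ⊆ s ∧ Nonempty (G.induce (s : Set V) ≃g C5)} : ℝ) ≤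
      (((Fintype.card V : ℝ) - 3) / 2) ^ 2 := by
  classical
  obtain ⟨x₁, x₂, x₃, h₁₂, h₁₃, h₂₃, rfl⟩ := card_eq_three.mp hX
  have hsum := card_filter_add_card_filter_add_card_le {x₁, x₂, x₃} (G.adjSig x₁ x₂ x₃)
    (c5ExtraSigs_fst_ne_snd (G.adjPattern x₁ x₂ x₃))
  rw [hX] at hsum
  exact (Nat.cast_le.mpr (natCard_induce_iso_C5_le G h₁₂ h₁₃ h₂₃)).trans
    (by push_cast; exact mul_le_sq_half_sub hsum)

end SimpleGraph

theorem c5_through_triple_bound_general (n : ℕ) (G : SimpleGraph (Fin n))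
    (X : Finset (Fin n)) (hX : X.card = 3) :
    (c5ThroughSet G X : ℝ) ≤ (((n : ℝ) - 3) / 2) ^ 2 := by
  simpa [c5ThroughSet] using G.natCard_induce_iso_C5_le_sq hX

/-- If `X` is a set of 3 vertices of a graph `G` on `n ≥ 3` vertices, then the number of
induced copies of `C5` containing `X` is at most `((n−3)/2)²`. -/
theorem c5_through_triple_bound (n : ℕ) (hn : 3 ≤ n) (G : SimpleGraph (Fin n))
    (X : Finset (Fin n)) (hX : X.card = 3) :
    (c5ThroughSet G X : ℝ) ≤ (((n : ℝ) - 3) / 2) ^ 2 :=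
  c5_through_triple_bound_general n G X hX
end

section
/- Let G be a graph on n vertices with a partition of its vertex set into five parts X1,...,X5, and suppose E_f ≠ ∅. Then the number of induced copies of C5 in G whose vertex set contains two vertex-disjoint funky pairs is at most (1/2)·|E_f|·(|E_f| − dn − 1)·((y1 + y2 + (y3 + y4 + y5)/2)·n − 2). -/
open scoped Classical

/-- Given a partition of the vertices of `G` into five parts (a map `P` to `Fin 5`),
a pair `{u,v}` with `u ∈ X_i`, `v ∈ X_j`, `i ≠ j` is funky if either `uv` is an edge and
`|i−j| ∈ {2,3}`, or `uv` is a non-edge and `|i−j| ∈ {1,4}`. -/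
def Funky {n : ℕ} (G : SimpleGraph (Fin n)) (P : Fin n → Fin 5) (u v : Fin n) : Prop :=
  (G.Adj u v ∧ (((P u : ℕ) : ℤ) - ((P v : ℕ) : ℤ)).natAbs ∈ ({2, 3} : Set ℕ)) ∨
  (¬ G.Adj u v ∧ (((P u : ℕ) : ℤ) - ((P v : ℕ) : ℤ)).natAbs ∈ ({1, 4} : Set ℕ))

/-- The set `E_f` of funky pairs, encoded as ordered pairs `(u,v)` with `u < v`. -/
noncomputable def funkyPairs {n : ℕ} (G : SimpleGraph (Fin n)) (P : Fin n → Fin 5) :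
    Finset (Fin n × Fin n) :=
  Finset.univ.filter fun p => p.1 < p.2 ∧ Funky G P p.1 p.2

/-- `d_f(v)`, the number of funky pairs containing the vertex `v`. -/
noncomputable def fdeg {n : ℕ} (G : SimpleGraph (Fin n)) (P : Fin n → Fin 5)
    (v : Fin n) : ℕ :=
  (Finset.univ.filter fun w => Funky G P v w).card

/-- `d`, the average number of funky pairs incident to a funky pair, divided by `n`:
`d = (Σ_{{u,v} ∈ E_f} (d_f(u) + d_f(v) − 2)) / (|E_f| · n)`. -/
noncomputable def dAvg {n : ℕ} (G : SimpleGraph (Fin n)) (P : Fin n → Fin 5) : ℝ :=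
  (∑ p ∈ funkyPairs G P, ((fdeg G P p.1 : ℝ) + (fdeg G P p.2 : ℝ) - 2)) /
    (((funkyPairs G P).card : ℝ) * (n : ℝ))

/-- `x_i = |X_i| / n`, the normalized size of the `i`-th part. -/
noncomputable def partFrac {n : ℕ} (P : Fin n → Fin 5) (i : Fin 5) : ℝ :=
  (Nat.card {v : Fin n // P v = i} : ℝ) / (n : ℝ)

/-- The number of induced copies of `C5` in `G` whose vertex set contains two
vertex-disjoint funky pairs. -/
noncomputable def c5TwoDisjointFunky {n : ℕ} (G : SimpleGraph (Fin n))
    (P : Fin n → Fin 5) : ℕ :=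
  Nat.card {s : Finset (Fin n) // s.card = 5 ∧
    Nonempty (G.induce (s : Set (Fin n)) ≃g C5) ∧
    ∃ a b c d : Fin n, a ∈ s ∧ b ∈ s ∧ c ∈ s ∧ d ∈ s ∧
      a ≠ c ∧ a ≠ d ∧ b ≠ c ∧ b ≠ d ∧ Funky G P a b ∧ Funky G P c d}

/-!
Each counted 5-cycle `s` spans some number `W(s) ≥ 1` of ordered pairs of disjoint funky pairs,
so the count equals `∑_{(p,q)} ∑_{s ⊇ p ∪ q} 1 / W(s)`. Fix `(p,q)` with vertex set `F`. A 5-cycle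
through `F` is `F ∪ {e}`, and the neighbours of `e` in `F` are forced: they are the vertices of
degree one in `G[F]`. Always `W ≥ 2`, from `(p,q)` and `(q,p)`, and `W ≥ 4` as soon as `e` forms
a funky pair with a vertex `v` of `F`, from `(p,q)`, `({e,v},q)` (if `v ∈ p`) and their swaps.
As `e` has both a neighbour and a non-neighbour in `F`, the latter fails for at most two parts
of `e`, which hold at most `(y₁ + y₂)n` vertices. So the inner sum is at most
`((n - 4) + (y₁ + y₂)n) / 4`, while the number of ordered pairs of disjoint funky pairs is
`|E_f|(|E_f| - dn - 1)`.
-/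

open Finset

theorem card_eq_sum_sum_inv_card_filter {α β 𝕜 : Type*} [DivisionSemiring 𝕜] [CharZero 𝕜]
    (S : Finset α) (T : Finset β) (r : α → β → Prop) [∀ s, DecidablePred (r s)]
    (h : ∀ s ∈ S, ∃ t ∈ T, r s t) :
    (#S : 𝕜) = ∑ t ∈ T, ∑ s ∈ S with r s t, (#{t ∈ T | r s t} : 𝕜)⁻¹ := by
  calc (#S : 𝕜) = ∑ s ∈ S, ∑ t ∈ T with r s t, (#{t ∈ T | r s t} : 𝕜)⁻¹ := by
        rw [card_eq_sum_ones, Nat.cast_sum]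
        refine sum_congr rfl fun s hs => ?_
        obtain ⟨t, ht, hst⟩ := h s hs
        have hpos : 0 < #{t ∈ T | r s t} := card_pos.2 ⟨t, mem_filter.2 ⟨ht, hst⟩⟩
        rw [sum_const, nsmul_eq_mul, mul_inv_cancel₀ (by exact_mod_cast hpos.ne'), Nat.cast_one]
    _ = _ := sum_comm' fun s t => by simp only [mem_filter]; tauto

theorem sum_filter_superset_eq_sum_insert {α M : Type*} [Fintype α] [DecidableEq α]
    [AddCommMonoid M] (F : Finset α) (p : Finset α → Prop) (hp : ∀ s, p s → #s = #F + 1)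
    (f : Finset α → M) :
    ∑ s with p s ∧ F ⊆ s, f s = ∑ e with e ∉ F ∧ p (insert e F), f (insert e F) := by
  rw [← sum_image fun e he e' _ h => (insert_inj (mem_filter.1 he).2.1).1 h]
  congr 1
  ext s
  simp only [mem_filter, mem_univ, true_and, mem_image]
  constructor
  · rintro ⟨hs, hFs⟩
    obtain ⟨e, he, rfl⟩ := exists_eq_insert_iff.2 ⟨hFs, (hp s hs).symm⟩
    exact ⟨e, ⟨he, hs⟩, rfl⟩
  · rintro ⟨e, ⟨-, hs⟩, rfl⟩
    exact ⟨hs, subset_insert e F⟩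

theorem sum_le_add_of_card_le_two {k : ℕ} {y : Fin (k + 2) → ℝ} (hy : Antitone y)
    (hnonneg : ∀ i, 0 ≤ y i) {T : Finset (Fin (k + 2))} (hT : #T ≤ 2) :
    ∑ i ∈ T, y i ≤ y 0 + y 1 := by
  have h0 : ∀ i, y i ≤ y 0 := fun i => hy (Fin.zero_le i)
  interval_cases hcard : #T
  · simp [card_eq_zero.1 hcard, add_nonneg (hnonneg 0) (hnonneg 1)]
  · obtain ⟨i, rfl⟩ := card_eq_one.1 hcard
    simpa using add_le_add (h0 i) (hnonneg 1)
  · obtain ⟨i, j, hij, rfl⟩ := card_eq_two.1 hcard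
    wlog hlt : i < j generalizing i j
    · rw [pair_comm]
      exact this j i hij.symm (by rwa [pair_comm]) (lt_of_le_of_ne (not_lt.1 hlt) hij.symm)
    rw [sum_pair hij]
    exact add_le_add (h0 i) (hy (Fin.one_le_of_ne_zero (ne_bot_of_gt hlt)))

section Pairs

variable {α : Type*}

def pairSet [DecidableEq α] (p : α × α) : Finset α := {p.1, p.2}

def quadSet [DecidableEq α] (pq : (α × α) × (α × α)) : Finset α :=
  pairSet pq.1 ∪ pairSet pq.2

theorem quadSet_swap [DecidableEq α] (pq : (α × α) × (α × α)) :
    quadSet pq.swap = quadSet pq :=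
  union_comm _ _

variable [LinearOrder α]

theorem pairSet_min_max (u v : α) : pairSet (min u v, max u v) = {u, v} := by
  rcases le_total u v with h | h
  · simp [pairSet, h]
  · simp [pairSet, h, pair_comm]

theorem eq_of_mem_pairSet {p q : α × α} (hp : p.1 < p.2) (hq : q.1 < q.2)
    (h₁ : p.1 ∈ pairSet q) (h₂ : p.2 ∈ pairSet q) : p = q := by
  simp only [pairSet, mem_insert, mem_singleton] at h₁ h₂
  rcases h₁ with h₁ | h₁ <;> rcases h₂ with h₂ | h₂
  · exact absurd (h₁.trans h₂.symm) hp.ne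
  · exact Prod.ext h₁ h₂
  · rw [h₁, h₂] at hp
    exact absurd hq hp.asymm
  · exact absurd (h₁.trans h₂.symm) hp.ne

end Pairs

theorem C5_eq_cycleGraph : C5 = SimpleGraph.cycleGraph 5 := by
  ext i j
  simp only [C5, SimpleGraph.fromRel_adj, SimpleGraph.cycleGraph_adj]
  revert i j
  decide

theorem C5_degree (i : Fin 5) : C5.degree i = 2 := by
  convert SimpleGraph.cycleGraph_degree_three_le (n := 2) (v := i) using 2
  exact C5_eq_cycleGraph

section InducedC5

variable {V : Type*} {G : SimpleGraph V}

theorem card_eq_five_of_iso_C5 {s : Finset V} (φ : G.induce (s : Set V) ≃g C5) : #s = 5 := by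
  simpa using Fintype.card_congr φ.toEquiv

variable [Fintype V] [DecidableEq V]

variable (G) in
noncomputable def c5Completions (F : Finset V) : Finset V :=
  {e | e ∉ F ∧ Nonempty (G.induce ((insert e F : Finset V) : Set V) ≃g C5)}

theorem card_neighborFinset_inter_of_iso_C5 {s : Finset V}
    (φ : G.induce (s : Set V) ≃g C5) {v : V} (hv : v ∈ s) :
    #(G.neighborFinset v ∩ s) = 2 := by
  have h := SimpleGraph.map_neighborFinset_induce (G := G) (s := s) ⟨v, hv⟩
  rw [Finset.toFinset_coe] at h
  rw [← h, card_map, SimpleGraph.card_neighborFinset_eq_degree, ← φ.degree_eq, C5_degree]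

theorem card_neighborFinset_inter_of_mem_c5Completions {F : Finset V} {e : V}
    (he : e ∈ c5Completions G F) : #(G.neighborFinset e ∩ F) = 2 := by
  obtain ⟨-, ⟨φ⟩⟩ := (mem_filter.1 he).2
  have h := card_neighborFinset_inter_of_iso_C5 φ (mem_insert_self e F)
  rwa [inter_insert_of_notMem (by simp)] at h

theorem adj_iff_of_mem_c5Completions {F : Finset V} {e v : V} (he : e ∈ c5Completions G F)
    (hv : v ∈ F) : G.Adj e v ↔ #(G.neighborFinset v ∩ F) = 1 := by
  obtain ⟨heF, ⟨φ⟩⟩ := (mem_filter.1 he).2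
  have h := card_neighborFinset_inter_of_iso_C5 φ (mem_insert_of_mem hv)
  by_cases hev : G.Adj e v
  · rw [inter_insert_of_mem (by simpa using hev.symm), card_insert_of_notMem (by simp [heF])] at h
    simp only [hev, true_iff]
    omega
  · rw [inter_insert_of_notMem (by simpa [G.adj_comm] using hev)] at h
    simp [hev, h]

theorem adj_iff_adj_of_mem_c5Completions {F : Finset V} {e e' v : V}
    (he : e ∈ c5Completions G F) (he' : e' ∈ c5Completions G F) (hv : v ∈ F) :
    G.Adj e v ↔ G.Adj e' v :=
  (adj_iff_of_mem_c5Completions he hv).trans (adj_iff_of_mem_c5Completions he' hv).symm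

end InducedC5

/-- `Funky` read off the parts, with `|i - j|` replaced by `i - j` modulo 5 (see `funky_iff`). -/
def PartsFunky (adj : Prop) (i j : Fin 5) : Prop :=
  (adj ∧ (i - j = 2 ∨ i - j = 3)) ∨ (¬ adj ∧ (i - j = 1 ∨ i - j = 4))

instance (adj : Prop) [Decidable adj] (i j : Fin 5) : Decidable (PartsFunky adj i j) := by
  unfold PartsFunky
  infer_instance

theorem PartsFunky.symm {adj : Prop} {i j : Fin 5} (h : PartsFunky adj i j) :
    PartsFunky adj j i := by
  have key : ∀ i j : Fin 5, (i - j = 2 ∨ i - j = 3 → j - i = 2 ∨ j - i = 3) ∧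
      (i - j = 1 ∨ i - j = 4 → j - i = 1 ∨ j - i = 4) := by decide
  rcases h with ⟨ha, h⟩ | ⟨ha, h⟩
  exacts [Or.inl ⟨ha, (key i j).1 h⟩, Or.inr ⟨ha, (key i j).2 h⟩]

theorem card_filter_not_partsFunky_le_two (i j : Fin 5) :
    #{t | ¬ PartsFunky True t i ∧ ¬ PartsFunky False t j} ≤ 2 := by
  revert i j
  decide

section Funky

variable {n : ℕ} {G : SimpleGraph (Fin n)} {P : Fin n → Fin 5}

theorem funky_iff {u v : Fin n} : Funky G P u v ↔ PartsFunky (G.Adj u v) (P u) (P v) := by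
  have key : ∀ i j : Fin 5,
      ((((i : ℕ) : ℤ) - ((j : ℕ) : ℤ)).natAbs ∈ ({2, 3} : Set ℕ) ↔ i - j = 2 ∨ i - j = 3) ∧
      ((((i : ℕ) : ℤ) - ((j : ℕ) : ℤ)).natAbs ∈ ({1, 4} : Set ℕ) ↔ i - j = 1 ∨ i - j = 4) := by
    simp only [Set.mem_insert_iff, Set.mem_singleton_iff]
    decide
  simp only [Funky, PartsFunky, (key _ _).1, (key _ _).2]

theorem Funky.symm {u v : Fin n} (h : Funky G P u v) : Funky G P v u := by
  rw [funky_iff] at h ⊢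
  rw [G.adj_comm]
  exact h.symm

theorem Funky.ne {u v : Fin n} (h : Funky G P u v) : u ≠ v := by
  rintro rfl
  simp [funky_iff, PartsFunky] at h

end Funky

section FunkyPairs

variable {n : ℕ} (G : SimpleGraph (Fin n)) (P : Fin n → Fin 5)

noncomputable def disjointFunkyPairs : Finset ((Fin n × Fin n) × (Fin n × Fin n)) :=
  {pq ∈ funkyPairs G P ×ˢ funkyPairs G P | Disjoint (pairSet pq.1) (pairSet pq.2)}

variable {G P}

theorem mem_funkyPairs {p : Fin n × Fin n} :
    p ∈ funkyPairs G P ↔ p.1 < p.2 ∧ Funky G P p.1 p.2 := by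
  simp [funkyPairs]

theorem min_max_mem_funkyPairs {u v : Fin n} (h : Funky G P u v) :
    (min u v, max u v) ∈ funkyPairs G P := by
  rcases lt_or_gt_of_ne h.ne with huv | hvu
  · simpa [mem_funkyPairs, huv.le] using ⟨huv, h⟩
  · simpa [mem_funkyPairs, hvu.le] using ⟨hvu, h.symm⟩

theorem mem_disjointFunkyPairs {pq : (Fin n × Fin n) × (Fin n × Fin n)} :
    pq ∈ disjointFunkyPairs G P ↔ pq.1 ∈ funkyPairs G P ∧ pq.2 ∈ funkyPairs G P ∧
      Disjoint (pairSet pq.1) (pairSet pq.2) := by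
  simp [disjointFunkyPairs, and_assoc]

theorem swap_mem_disjointFunkyPairs {pq : (Fin n × Fin n) × (Fin n × Fin n)}
    (h : pq ∈ disjointFunkyPairs G P) : pq.swap ∈ disjointFunkyPairs G P := by
  rw [mem_disjointFunkyPairs] at h ⊢
  exact ⟨h.2.1, h.1, h.2.2.symm⟩

theorem fst_ne_snd_of_mem_disjointFunkyPairs {pq : (Fin n × Fin n) × (Fin n × Fin n)}
    (h : pq ∈ disjointFunkyPairs G P) : pq.1 ≠ pq.2 := fun heq => by
  have hdisj := (mem_disjointFunkyPairs.1 h).2.2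
  rw [heq, disjoint_self_iff_empty, pairSet] at hdisj
  exact insert_ne_empty _ _ hdisj

theorem card_quadSet {pq : (Fin n × Fin n) × (Fin n × Fin n)}
    (h : pq ∈ disjointFunkyPairs G P) : #(quadSet pq) = 4 := by
  obtain ⟨h₁, h₂, hdisj⟩ := mem_disjointFunkyPairs.1 h
  rw [quadSet, card_union_of_disjoint hdisj, pairSet, pairSet,
    card_pair (mem_funkyPairs.1 h₁).1.ne, card_pair (mem_funkyPairs.1 h₂).1.ne]

theorem card_filter_mem_pairSet (v : Fin n) :
    #{q ∈ funkyPairs G P | v ∈ pairSet q} = fdeg G P v := by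
  refine (card_nbij' (fun w => (min v w, max v w)) (fun q => if q.1 = v then q.2 else q.1)
    ?_ ?_ ?_ ?_).symm
  · intro w hw
    simp only [coe_filter, mem_univ, true_and, Set.mem_ofPred_eq] at hw ⊢
    exact ⟨min_max_mem_funkyPairs hw, by simp [pairSet_min_max]⟩
  · intro q hq
    simp only [coe_filter, mem_funkyPairs, pairSet, mem_insert, mem_singleton,
      mem_univ, true_and, Set.mem_ofPred_eq] at hq ⊢
    obtain ⟨⟨-, hf⟩, rfl | rfl⟩ := hq
    · simpa using hf
    · split_ifs with h
      · simpa [h] using hf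
      · exact hf.symm
  · intro w hw
    simp only [coe_filter, mem_univ, true_and, Set.mem_ofPred_eq] at hw
    rcases le_total v w with h | h <;> simp [h, hw.ne.symm]
  · intro q hq
    simp only [coe_filter, mem_funkyPairs, pairSet, mem_insert, mem_singleton,
      Set.mem_ofPred_eq] at hq
    obtain ⟨⟨hlt, -⟩, rfl | rfl⟩ := hq
    · simp [hlt.le]
    · simp [hlt.ne, hlt.le]

theorem card_filter_disjoint_add_fdeg {p : Fin n × Fin n} (hp : p ∈ funkyPairs G P) :
    #{q ∈ funkyPairs G P | Disjoint (pairSet p) (pairSet q)} + fdeg G P p.1 + fdeg G P p.2 =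
      #(funkyPairs G P) + 1 := by
  have hsplit := card_filter_add_card_filter_not (s := funkyPairs G P)
    (p := fun q => Disjoint (pairSet p) (pairSet q))
  have hmeet : {q ∈ funkyPairs G P | ¬ Disjoint (pairSet p) (pairSet q)} =
      {q ∈ funkyPairs G P | p.1 ∈ pairSet q} ∪ {q ∈ funkyPairs G P | p.2 ∈ pairSet q} := by
    rw [← filter_or]
    refine filter_congr fun q _ => ?_
    rw [show pairSet p = {p.1, p.2} from rfl, disjoint_insert_left, disjoint_singleton_left,
      not_and_or, not_not, not_not]
  have hboth : {q ∈ funkyPairs G P | p.1 ∈ pairSet q} ∩ {q ∈ funkyPairs G P | p.2 ∈ pairSet q} =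
      {p} := by
    rw [← filter_and]
    ext q
    simp only [mem_filter, mem_singleton]
    constructor
    · rintro ⟨hq, h₁, h₂⟩
      exact (eq_of_mem_pairSet (mem_funkyPairs.1 hp).1 (mem_funkyPairs.1 hq).1 h₁ h₂).symm
    · rintro rfl
      simp [hp, pairSet]
  have hunion := card_union_add_card_inter {q ∈ funkyPairs G P | p.1 ∈ pairSet q}
    {q ∈ funkyPairs G P | p.2 ∈ pairSet q}
  rw [← hmeet, hboth, card_singleton, card_filter_mem_pairSet, card_filter_mem_pairSet] at hunion
  omega

theorem card_disjointFunkyPairs_add_sum :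
    (#(disjointFunkyPairs G P) : ℝ) +
        ∑ p ∈ funkyPairs G P, ((fdeg G P p.1 : ℝ) + (fdeg G P p.2 : ℝ) - 2) =
      #(funkyPairs G P) * #(funkyPairs G P) - #(funkyPairs G P) := by
  have hcard : #(disjointFunkyPairs G P) =
      ∑ p ∈ funkyPairs G P, #{q ∈ funkyPairs G P | Disjoint (pairSet p) (pairSet q)} := by
    simp only [disjointFunkyPairs, card_filter, sum_product]
  have hterm : ∀ p ∈ funkyPairs G P,
      (#{q ∈ funkyPairs G P | Disjoint (pairSet p) (pairSet q)} : ℝ) +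
        ((fdeg G P p.1 : ℝ) + (fdeg G P p.2 : ℝ) - 2) = #(funkyPairs G P) - 1 := by
    intro p hp
    have h := card_filter_disjoint_add_fdeg hp
    rify at h
    linarith
  rw [hcard, Nat.cast_sum, ← sum_add_distrib, sum_congr rfl hterm, sum_const, nsmul_eq_mul]
  ring

theorem card_disjointFunkyPairs_eq (h : (funkyPairs G P).Nonempty) :
    (#(disjointFunkyPairs G P) : ℝ) =
      #(funkyPairs G P) * (#(funkyPairs G P) - dAvg G P * n - 1) := by
  obtain ⟨p, hp⟩ := h
  have hn : (n : ℝ) ≠ 0 := by exact_mod_cast (Fin.pos p.1).ne'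
  have hE : (#(funkyPairs G P) : ℝ) ≠ 0 := by exact_mod_cast (card_pos.2 ⟨p, hp⟩).ne'
  have := card_disjointFunkyPairs_add_sum (G := G) (P := P)
  rw [dAvg]
  field_simp
  linarith

end FunkyPairs

section PairWeight

variable {n : ℕ} (G : SimpleGraph (Fin n)) (P : Fin n → Fin 5)

noncomputable def pairWeight (s : Finset (Fin n)) : ℕ :=
  #{pq ∈ disjointFunkyPairs G P | quadSet pq ⊆ s}

/-- The parts `t` such that a vertex of part `t` with the same neighbours in `F` as `e₀` forms
no funky pair with a vertex of `F`. -/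
noncomputable def safeParts (F : Finset (Fin n)) (e₀ : Fin n) : Finset (Fin 5) :=
  {t | ∀ v ∈ F, ¬ PartsFunky (G.Adj e₀ v) t (P v)}

variable {G P}

theorem mem_and_swap_mem_filter_subset {pq : (Fin n × Fin n) × (Fin n × Fin n)}
    (h : pq ∈ disjointFunkyPairs G P) {s : Finset (Fin n)} (hs : quadSet pq ⊆ s) :
    pq ∈ {pq ∈ disjointFunkyPairs G P | quadSet pq ⊆ s} ∧
      pq.swap ∈ {pq ∈ disjointFunkyPairs G P | quadSet pq ⊆ s} := by
  simp only [mem_filter, quadSet_swap]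
  exact ⟨⟨h, hs⟩, swap_mem_disjointFunkyPairs h, hs⟩

theorem two_le_pairWeight {pq : (Fin n × Fin n) × (Fin n × Fin n)}
    (h : pq ∈ disjointFunkyPairs G P) {s : Finset (Fin n)} (hs : quadSet pq ⊆ s) :
    2 ≤ pairWeight G P s := by
  have hne : pq ≠ pq.swap := fun heq =>
    fst_ne_snd_of_mem_disjointFunkyPairs h (congrArg Prod.fst heq)
  obtain ⟨h₁, h₂⟩ := mem_and_swap_mem_filter_subset h hs
  calc 2 = #{pq, pq.swap} := (card_pair hne).symm
    _ ≤ pairWeight G P s := card_le_card (by simp [insert_subset_iff, h₁, h₂])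

theorem four_le_pairWeight {p q r : Fin n × Fin n} (hpq : (p, q) ∈ disjointFunkyPairs G P)
    (hrq : (r, q) ∈ disjointFunkyPairs G P) (hrp : r ≠ p) {s : Finset (Fin n)}
    (hs : quadSet (p, q) ⊆ s) (hr : quadSet (r, q) ⊆ s) : 4 ≤ pairWeight G P s := by
  have hp := fst_ne_snd_of_mem_disjointFunkyPairs hpq
  have hr' := fst_ne_snd_of_mem_disjointFunkyPairs hrq
  obtain ⟨h₁, h₂⟩ := mem_and_swap_mem_filter_subset hpq hs
  obtain ⟨h₃, h₄⟩ := mem_and_swap_mem_filter_subset hrq hr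
  calc 4 = #{(p, q), (q, p), (r, q), (q, r)} := by
        rw [card_insert_of_notMem, card_insert_of_notMem, card_pair] <;>
          simp [hp, hp.symm, hr', hr'.symm, hrp.symm]
    _ ≤ pairWeight G P s := by
        refine card_le_card ?_
        simp only [insert_subset_iff, singleton_subset_iff]
        exact ⟨h₁, h₂, h₃, h₄⟩

theorem four_le_pairWeight_of_funky_of_mem_fst {p q : Fin n × Fin n}
    (h : (p, q) ∈ disjointFunkyPairs G P) {e v : Fin n} (he : e ∉ quadSet (p, q))
    (hv : v ∈ pairSet p) (hf : Funky G P e v) {s : Finset (Fin n)}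
    (hs : insert e (quadSet (p, q)) ⊆ s) : 4 ≤ pairWeight G P s := by
  obtain ⟨-, hq, hdisj⟩ := mem_disjointFunkyPairs.1 h
  simp only [quadSet, mem_union, not_or] at he
  have hrq : ((min e v, max e v), q) ∈ disjointFunkyPairs G P := by
    refine mem_disjointFunkyPairs.2 ⟨min_max_mem_funkyPairs hf, hq, ?_⟩
    rw [pairSet_min_max, disjoint_insert_left, disjoint_singleton_left]
    exact ⟨he.2, disjoint_left.1 hdisj hv⟩
  refine four_le_pairWeight h hrq (fun heq => he.1 ?_) ((subset_insert _ _).trans hs) ?_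
  · rw [← heq, pairSet_min_max]
    exact mem_insert_self e {v}
  · refine subset_trans ?_ hs
    rw [quadSet, pairSet_min_max, insert_union]
    exact insert_subset_insert e (union_subset_union (singleton_subset_iff.2 hv) subset_rfl)

theorem four_le_pairWeight_of_funky {pq : (Fin n × Fin n) × (Fin n × Fin n)}
    (h : pq ∈ disjointFunkyPairs G P) {e v : Fin n} (he : e ∉ quadSet pq)
    (hv : v ∈ quadSet pq) (hf : Funky G P e v) {s : Finset (Fin n)}
    (hs : insert e (quadSet pq) ⊆ s) : 4 ≤ pairWeight G P s := by
  obtain ⟨p, q⟩ := pq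
  rcases mem_union.1 hv with hv | hv
  · exact four_le_pairWeight_of_funky_of_mem_fst h he hv hf hs
  · rw [← quadSet_swap] at he hs
    exact four_le_pairWeight_of_funky_of_mem_fst (swap_mem_disjointFunkyPairs h) he hv hf hs

theorem card_safeParts_le_two {F : Finset (Fin n)} (hF : #F = 4) {e₀ : Fin n}
    (he₀ : e₀ ∈ c5Completions G F) : #(safeParts G P F e₀) ≤ 2 := by
  have hdeg := card_neighborFinset_inter_of_mem_c5Completions he₀
  obtain ⟨v₁, hv₁⟩ : (G.neighborFinset e₀ ∩ F).Nonempty := card_pos.1 (by omega)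
  obtain ⟨v₂, hv₂⟩ : (F \ G.neighborFinset e₀).Nonempty :=
    card_pos.1 (by rw [card_sdiff]; omega)
  simp only [mem_inter, mem_sdiff, SimpleGraph.mem_neighborFinset] at hv₁ hv₂
  refine (card_le_card fun t ht => ?_).trans (card_filter_not_partsFunky_le_two (P v₁) (P v₂))
  simp only [safeParts, mem_filter, mem_univ, true_and] at ht ⊢
  have h₁ := ht v₁ hv₁.2
  have h₂ := ht v₂ hv₂.1
  rw [eq_true hv₁.1] at h₁
  rw [eq_false hv₂.2] at h₂
  exact ⟨h₁, h₂⟩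

theorem exists_funky_of_notMem_safeParts {F : Finset (Fin n)} {e₀ e : Fin n}
    (he₀ : e₀ ∈ c5Completions G F) (he : e ∈ c5Completions G F)
    (ht : P e ∉ safeParts G P F e₀) : ∃ v ∈ F, Funky G P e v := by
  simp only [safeParts, mem_filter, mem_univ, true_and, not_forall, not_not] at ht
  obtain ⟨v, hv, hpf⟩ := ht
  rw [← adj_iff_adj_of_mem_c5Completions he he₀ hv] at hpf
  exact ⟨v, hv, funky_iff.2 hpf⟩

theorem inv_pairWeight_insert_le {pq : (Fin n × Fin n) × (Fin n × Fin n)}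
    (h : pq ∈ disjointFunkyPairs G P) {e₀ e : Fin n}
    (he₀ : e₀ ∈ c5Completions G (quadSet pq)) (he : e ∈ c5Completions G (quadSet pq)) :
    (pairWeight G P (insert e (quadSet pq)) : ℝ)⁻¹ ≤
      (1 + if P e ∈ safeParts G P (quadSet pq) e₀ then 1 else 0) / 4 := by
  split_ifs with ht
  · have h2 : (2 : ℝ) ≤ pairWeight G P (insert e (quadSet pq)) := by
      exact_mod_cast two_le_pairWeight h (subset_insert e _)
    calc (pairWeight G P (insert e (quadSet pq)) : ℝ)⁻¹ ≤ 2⁻¹ := inv_anti₀ two_pos h2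
      _ = (1 + 1) / 4 := by norm_num
  · obtain ⟨v, hv, hf⟩ := exists_funky_of_notMem_safeParts he₀ he ht
    have h4 : (4 : ℝ) ≤ pairWeight G P (insert e (quadSet pq)) := by
      exact_mod_cast four_le_pairWeight_of_funky h (mem_filter.1 he).2.1 hv hf subset_rfl
    calc (pairWeight G P (insert e (quadSet pq)) : ℝ)⁻¹ ≤ 4⁻¹ := inv_anti₀ four_pos h4
      _ = (1 + 0) / 4 := by norm_num

theorem sum_inv_pairWeight_insert_le {C : ℝ}
    (hC : ∀ T : Finset (Fin 5), #T ≤ 2 → (#{v | P v ∈ T} : ℝ) ≤ C)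
    {pq : (Fin n × Fin n) × (Fin n × Fin n)} (h : pq ∈ disjointFunkyPairs G P) :
    ∑ e ∈ c5Completions G (quadSet pq), (pairWeight G P (insert e (quadSet pq)) : ℝ)⁻¹ ≤
      (n - 4 + C) / 4 := by
  set F := quadSet pq
  have hF : #F = 4 := card_quadSet h
  have hcompl : (#(univ \ F) : ℝ) = n - 4 := by
    rw [card_sdiff_of_subset (subset_univ F), card_univ, Fintype.card_fin, hF,
      Nat.cast_sub (by simpa [hF] using card_le_univ F)]
    norm_num
  rcases eq_empty_or_nonempty (c5Completions G F) with hE | ⟨e₀, he₀⟩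
  · have hC0 : 0 ≤ C := by simpa using hC ∅ (by simp)
    have : (0 : ℝ) ≤ #(univ \ F) := Nat.cast_nonneg _
    rw [hE, sum_empty]
    linarith
  set T := safeParts G P F e₀
  have hT : (#{v | P v ∈ T} : ℝ) ≤ C := hC T (card_safeParts_le_two hF he₀)
  calc _ ≤ ∑ e ∈ c5Completions G F, ((1 : ℝ) + if P e ∈ T then 1 else 0) / 4 :=
        sum_le_sum fun e he => inv_pairWeight_insert_le h he₀ he
    _ ≤ ∑ e ∈ univ \ F, ((1 : ℝ) + if P e ∈ T then 1 else 0) / 4 :=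
        sum_le_sum_of_subset_of_nonneg (fun e he => by simpa using (mem_filter.1 he).2.1)
          fun _ _ _ => by positivity
    _ = (#(univ \ F) + #{e ∈ univ \ F | P e ∈ T}) / 4 := by
        rw [← sum_div, sum_add_distrib, sum_const, sum_boole, nsmul_one]
    _ ≤ (n - 4 + C) / 4 := by
        have hsub : (#{e ∈ univ \ F | P e ∈ T} : ℝ) ≤ #{v | P v ∈ T} := by
          exact_mod_cast card_le_card (filter_subset_filter _ (subset_univ _))
        rw [hcompl]
        linarith

end PairWeight

section Counting

variable {n : ℕ} {G : SimpleGraph (Fin n)} {P : Fin n → Fin 5}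

theorem exists_funky_iff_exists_disjointFunkyPairs {s : Finset (Fin n)} :
    (∃ a b c d : Fin n, a ∈ s ∧ b ∈ s ∧ c ∈ s ∧ d ∈ s ∧
      a ≠ c ∧ a ≠ d ∧ b ≠ c ∧ b ≠ d ∧ Funky G P a b ∧ Funky G P c d) ↔
    ∃ pq ∈ disjointFunkyPairs G P, quadSet pq ⊆ s := by
  constructor
  · rintro ⟨a, b, c, d, ha, hb, hc, hd, hac, had, hbc, hbd, hab, hcd⟩
    refine ⟨((min a b, max a b), (min c d, max c d)), mem_disjointFunkyPairs.2
      ⟨min_max_mem_funkyPairs hab, min_max_mem_funkyPairs hcd, ?_⟩, ?_⟩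
    · simp [pairSet_min_max, hac.symm, had.symm, hbc.symm, hbd.symm]
    · simp [quadSet, pairSet_min_max, insert_subset_iff, ha, hb, hc, hd]
  · rintro ⟨⟨⟨a, b⟩, ⟨c, d⟩⟩, h, hs⟩
    obtain ⟨hab, hcd, hdisj⟩ := mem_disjointFunkyPairs.1 h
    simp only [quadSet, pairSet, insert_union, insert_subset_iff, singleton_union,
      singleton_subset_iff] at hs
    simp only [pairSet, disjoint_insert_left, disjoint_singleton_left, mem_insert,
      mem_singleton, not_or] at hdisj
    exact ⟨a, b, c, d, hs.1, hs.2.1, hs.2.2.1, hs.2.2.2, hdisj.1.1, hdisj.1.2, hdisj.2.1,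
      hdisj.2.2, (mem_funkyPairs.1 hab).2, (mem_funkyPairs.1 hcd).2⟩

theorem c5TwoDisjointFunky_eq_card :
    c5TwoDisjointFunky G P = #{s : Finset (Fin n) | Nonempty (G.induce (s : Set (Fin n)) ≃g C5) ∧
      ∃ pq ∈ disjointFunkyPairs G P, quadSet pq ⊆ s} := by
  rw [c5TwoDisjointFunky, Nat.card_eq_fintype_card, Fintype.card_subtype]
  refine congrArg card (filter_congr fun s _ => ?_)
  rw [exists_funky_iff_exists_disjointFunkyPairs]
  exact ⟨fun h => h.2, fun ⟨⟨φ⟩, h⟩ => ⟨card_eq_five_of_iso_C5 φ, ⟨φ⟩, h⟩⟩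

theorem c5TwoDisjointFunky_le {C : ℝ}
    (hC : ∀ T : Finset (Fin 5), #T ≤ 2 → (#{v | P v ∈ T} : ℝ) ≤ C) :
    (c5TwoDisjointFunky G P : ℝ) ≤ #(disjointFunkyPairs G P) * ((n - 4 + C) / 4) := by
  rw [c5TwoDisjointFunky_eq_card, card_eq_sum_sum_inv_card_filter _ (disjointFunkyPairs G P)
    (fun s pq => quadSet pq ⊆ s) fun s hs => (mem_filter.1 hs).2.2, ← nsmul_eq_mul, ← sum_const]
  refine sum_le_sum fun pq hpq => ?_
  have hfilter : ∀ s : Finset (Fin n), (Nonempty (G.induce (s : Set (Fin n)) ≃g C5) ∧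
      ∃ pq ∈ disjointFunkyPairs G P, quadSet pq ⊆ s) ∧ quadSet pq ⊆ s ↔
      Nonempty (G.induce (s : Set (Fin n)) ≃g C5) ∧ quadSet pq ⊆ s :=
    fun s => ⟨fun h => ⟨h.1.1, h.2⟩, fun h => ⟨⟨h.1, pq, hpq, h.2⟩, h.2⟩⟩
  simp only [filter_filter, hfilter]
  rw [sum_filter_superset_eq_sum_insert _ _ fun s ⟨φ⟩ => by
    rw [card_eq_five_of_iso_C5 φ, card_quadSet hpq]]
  exact sum_inv_pairWeight_insert_le hC hpq

end Counting

section PartSizes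

variable {n : ℕ} {P : Fin n → Fin 5}

theorem partFrac_mul_self (t : Fin 5) : partFrac P t * n = #{v | P v = t} := by
  rw [partFrac, Nat.card_eq_fintype_card, Fintype.card_subtype]
  refine div_mul_cancel_of_imp fun hn => ?_
  have : IsEmpty (Fin n) := by
    rw [Nat.cast_eq_zero.1 hn]
    infer_instance
  simp

theorem sum_partFrac (hn : n ≠ 0) : ∑ t, partFrac P t = 1 := by
  have h := sum_card_fiberwise_eq_card_filter univ univ P
  simp only [mem_univ, filter_true, card_univ, Fintype.card_fin] at h
  have hn' : (n : ℝ) ≠ 0 := by exact_mod_cast hn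
  rw [← mul_left_inj' hn', sum_mul, one_mul]
  simp_rw [partFrac_mul_self]
  exact_mod_cast h

theorem card_filter_mem_le_of_card_le_two {y : Fin 5 → ℝ} {σ : Equiv.Perm (Fin 5)}
    (hy : ∀ i, y i = partFrac P (σ i)) (hmono : Antitone y) {T : Finset (Fin 5)}
    (hT : #T ≤ 2) : (#{v | P v ∈ T} : ℝ) ≤ (y 0 + y 1) * n := by
  have hnonneg : ∀ i, 0 ≤ y i := fun i => by
    rw [hy, partFrac]
    positivity
  calc (#{v | P v ∈ T} : ℝ) = (∑ i ∈ T.map σ.symm.toEmbedding, y i) * n := by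
        rw [sum_map, sum_mul, ← sum_card_fiberwise_eq_card_filter, Nat.cast_sum]
        simp [hy, partFrac_mul_self]
    _ ≤ (y 0 + y 1) * n := by
        gcongr
        exact sum_le_add_of_card_le_two hmono hnonneg (by simpa using hT)

end PartSizes

/-- Claim 7 (Claim `count1`): the number of induced 5-cycles containing two
vertex-disjoint funky pairs is at most
`(1/2)·|E_f|·(|E_f| − dn − 1)·((y₁ + y₂ + (y₃+y₄+y₅)/2)·n − 2)`. -/
theorem count_two_disjoint_funky (n : ℕ) (G : SimpleGraph (Fin n))
    (P : Fin n → Fin 5) (hEf : (funkyPairs G P).Nonempty)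
    (y : Fin 5 → ℝ) (σ : Equiv.Perm (Fin 5))
    (hy : ∀ i, y i = partFrac P (σ i))
    (hmono : ∀ i j : Fin 5, i ≤ j → y j ≤ y i) :
    (c5TwoDisjointFunky G P : ℝ) ≤
      (1 / 2) * ((funkyPairs G P).card : ℝ) *
        (((funkyPairs G P).card : ℝ) - dAvg G P * (n : ℝ) - 1) *
        ((y 0 + y 1 + (y 2 + y 3 + y 4) / 2) * (n : ℝ) - 2) := by
  have hn : n ≠ 0 := by
    obtain ⟨p, -⟩ := hEf
    exact (Fin.pos p.1).ne'
  have hsum : y 0 + y 1 + y 2 + y 3 + y 4 = 1 := by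
    rw [← Fin.sum_univ_five, ← sum_partFrac (P := P) hn, ← Equiv.sum_comp σ (partFrac P)]
    exact sum_congr rfl fun i _ => hy i
  calc (c5TwoDisjointFunky G P : ℝ)
      ≤ #(disjointFunkyPairs G P) * ((n - 4 + (y 0 + y 1) * n) / 4) :=
        c5TwoDisjointFunky_le fun _ hT => card_filter_mem_le_of_card_le_two hy hmono hT
    _ = _ := by
        rw [card_disjointFunkyPairs_eq hEf]
        linear_combination
          -(#(funkyPairs G P) * (#(funkyPairs G P) - dAvg G P * n - 1) * n / 4) * hsum
end

section
/- Let G be a graph and let G* be a blow-up of G with nonempty parts (H_v)_{v∈V(G)}. Then every 5-element subset Z of V(G*) that induces a copy of C5 satisfies exactly one of the following: (i) Z ⊆ H_v for some v ∈ V(G); or (ii) |Z ∩ H_v| ≤ 1 for every v ∈ V(G), and the five vertices v ∈ V(G) with |Z ∩ H_v| = 1 induce a copy of C5 in G. -/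
open scoped Classical

lemma C5_adj (i j : Fin 5) : C5.Adj i j ↔ i ≠ j ∧ (j = i + 1 ∨ i = j + 1) := by
  simp [C5, SimpleGraph.fromRel_adj]

lemma c5_no_module : ∀ S : Finset (Fin 5), 2 ≤ S.card → S ≠ Finset.univ →
    ¬ (∀ c, c ∉ S → ∀ a ∈ S, ∀ b ∈ S,
      ((c ≠ a ∧ (a = c+1 ∨ c = a+1)) ↔ (c ≠ b ∧ (b = c+1 ∨ c = b+1)))) := by
  decide

/-- Let `Gstar` be a blow-up of `G` with nonempty parts, given by a surjection
`P : V(Gstar) → V(G)` (the part of `v` is the fiber `P⁻¹(v)`), such that between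
distinct parts `Gstar` is complete or empty according to adjacency in `G`. Then every
5-element subset `Z` of `V(Gstar)` inducing a copy of `C5` satisfies exactly one of:
(i) `Z` lies inside a single part; or (ii) `Z` meets every part in at most one vertex,
and the five vertices of `G` whose parts meet `Z` induce a copy of `C5` in `G`. -/
theorem blowup_c5_dichotomy {V W : Type} [Fintype V] [Fintype W]
    (G : SimpleGraph V) (Gstar : SimpleGraph W)
    (P : W → V) (hsurj : Function.Surjective P)
    (hblow : ∀ w w' : W, P w ≠ P w' → (Gstar.Adj w w' ↔ G.Adj (P w) (P w')))
    (Z : Finset W) (hZ : Z.card = 5)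
    (hC5 : Nonempty (Gstar.induce (Z : Set W) ≃g C5)) :
    Xor'
      (∃ v : V, ∀ z ∈ Z, P z = v)
      ((∀ v : V, (Z.filter fun z => P z = v).card ≤ 1) ∧
        Nonempty (G.induce ((Z.image P : Finset V) : Set V) ≃g C5)) := by
  obtain ⟨e⟩ := hC5
  set g : Fin 5 → W := fun i => ((e.symm i : (Z : Set W)) : W) with hg
  have hgZ : ∀ i, g i ∈ Z := fun i => (e.symm i).2
  have hginj : Function.Injective g := by
    intro i j h
    exact e.symm.toEquiv.injective (Subtype.ext h)
  have hgsurj : ∀ z ∈ Z, ∃ i, g i = z := by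
    intro z hz
    refine ⟨e ⟨z, hz⟩, ?_⟩
    simp [hg]
  have hadj : ∀ i j, Gstar.Adj (g i) (g j) ↔ C5.Adj i j := by
    intro i j
    simpa using e.symm.map_adj_iff (v := i) (w := j)
  set f : Fin 5 → V := fun i => P (g i) with hf
  by_cases hconst : ∀ i j : Fin 5, f i = f j
  · left
    constructor
    · exact ⟨f 0, fun z hz => by obtain ⟨i, rfl⟩ := hgsurj z hz; exact hconst i 0⟩
    · rintro ⟨h1, -⟩
      have hfil : (Z.filter fun z => P z = f 0) = Z := by
        apply Finset.filter_eq_self.2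
        intro z hz
        obtain ⟨i, rfl⟩ := hgsurj z hz
        exact hconst i 0
      have := h1 (f 0)
      rw [hfil, hZ] at this
      omega
  · push_neg at hconst
    obtain ⟨i0, j0, hij0⟩ := hconst
    have hfinj : Function.Injective f := by
      intro a b hab
      by_contra hne
      set S : Finset (Fin 5) := Finset.univ.filter (fun c => f c = f a) with hS
      have haS : a ∈ S := by simp [hS]
      have hbS : b ∈ S := by simp [hS, hab]
      have hScard : 2 ≤ S.card := by
        have : ({a, b} : Finset (Fin 5)) ⊆ S := by
          intro x hx
          simp only [Finset.mem_insert, Finset.mem_singleton] at hx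
          rcases hx with rfl | rfl
          · exact haS
          · exact hbS
        have h2 : ({a, b} : Finset (Fin 5)).card = 2 := Finset.card_pair hne
        calc 2 = ({a, b} : Finset (Fin 5)).card := h2.symm
          _ ≤ S.card := Finset.card_le_card this
      have hSne : S ≠ Finset.univ := by
        intro h
        have hi : f i0 = f a := by
          have := h ▸ (Finset.mem_univ i0); simpa [hS] using this
        have hj : f j0 = f a := by
          have := h ▸ (Finset.mem_univ j0); simpa [hS] using this
        exact hij0 (hi.trans hj.symm)
      apply c5_no_module S hScard hSne
      intro c hc x hx y hy
      have hfx : f x = f a := by simpa [hS] using hx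
      have hfy : f y = f a := by simpa [hS] using hy
      have hfc : f c ≠ f a := by simpa [hS] using hc
      rw [← C5_adj, ← C5_adj, ← hadj, ← hadj,
        hblow _ _ (show f c ≠ f x from fun h => hfc (h.trans hfx)),
        hblow _ _ (show f c ≠ f y from fun h => hfc (h.trans hfy))]
      show G.Adj (f c) (f x) ↔ G.Adj (f c) (f y)
      rw [hfx, hfy]
    refine Or.inr ⟨⟨?_, ?_⟩, ?_⟩
    · intro v
      by_contra h
      push_neg at h
      obtain ⟨z1, hz1, z2, hz2, hne⟩ := Finset.one_lt_card.mp h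
      simp only [Finset.mem_filter] at hz1 hz2
      obtain ⟨i, rfl⟩ := hgsurj z1 hz1.1
      obtain ⟨j, rfl⟩ := hgsurj z2 hz2.1
      exact hne (congrArg g (hfinj (show f i = f j from hz1.2.trans hz2.2.symm)))
    · have hmem : ∀ i, f i ∈ ((Z.image P : Finset V) : Set V) := by
        intro i
        simp only [Finset.coe_image, Set.mem_image, Finset.mem_coe]
        exact ⟨g i, hgZ i, rfl⟩
      set φ : Fin 5 → ((Z.image P : Finset V) : Set V) := fun i => ⟨f i, hmem i⟩ with hφ
      have hbij : Function.Bijective φ := by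
        constructor
        · intro a b h
          exact hfinj (congrArg Subtype.val h)
        · rintro ⟨v, hv⟩
          simp only [Finset.coe_image, Set.mem_image, Finset.mem_coe] at hv
          obtain ⟨z, hz, rfl⟩ := hv
          obtain ⟨i, rfl⟩ := hgsurj z hz
          exact ⟨i, rfl⟩
      refine ⟨(RelIso.mk (Equiv.ofBijective φ hbij) ?_).symm⟩
      intro i j
      show (G.induce _).Adj (φ i) (φ j) ↔ C5.Adj i j
      show G.Adj (f i) (f j) ↔ C5.Adj i j
      rcases eq_or_ne i j with rfl | hne
      · simp [SimpleGraph.irrefl]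
      · rw [← hadj, hblow _ _ (fun h => hne (hfinj h))]
    · rintro ⟨v, hv⟩
      exact hij0 ((hv _ (hgZ i0)).trans (hv _ (hgZ j0)).symm)
end
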